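/- Let X and Y be Banach spaces, Γ a nonempty set, E an invariant sequence space over X, E_λ a strongly invariant sequence space over Y for each λ ∈ Γ, and f : X → Y a function with f(0) = 0. If x ∈ G(E, f, (E_λ)_{λ∈Γ}), then its zero-free version x⁰ also belongs to G(E, f, (E_λ)_{λ∈Γ}). -/

import Mathlib

/-- The zero-free version `x⁰` of a sequence: if `x` has infinitely many nonzero
coordinates, it enumerates them in increasing order of index; otherwise it is `0`. -/
noncomputable def zeroFree {X : Type*} [Zero X] (x : ℕ → X) : ℕ → X :=
  haveI := Classical.dec ({j | x j ≠ 0}.Infinite)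
  if {j | x j ≠ 0}.Infinite then (fun k => x (Nat.nth (fun j => x j ≠ 0) k)) else 0

/-- An invariant sequence space over a Banach space `X`: an infinite-dimensional Banach
space of `X`-valued sequences satisfying (b1) and (b2) of Definition 2.1 of [BDFP]. -/
structure InvSeqSpace (𝕂 : Type*) [RCLike 𝕂] (X : Type*)
    [NormedAddCommGroup X] [NormedSpace 𝕂 X] where
  carrier : Submodule 𝕂 (ℕ → X)
  nrm : (ℕ → X) → ℝ
  K : ℝ
  infinite_dim : ¬ Module.Finite 𝕂 carrier
  nrm_nonneg : ∀ x ∈ carrier, 0 ≤ nrm x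
  nrm_eq_zero_iff : ∀ x ∈ carrier, (nrm x = 0 ↔ x = 0)
  nrm_add_le : ∀ x ∈ carrier, ∀ y ∈ carrier, nrm (x + y) ≤ nrm x + nrm y
  nrm_smul : ∀ (a : 𝕂), ∀ x ∈ carrier, nrm (a • x) = ‖a‖ * nrm x
  complete : ∀ u : ℕ → (ℕ → X), (∀ n, u n ∈ carrier) →
    (∀ ε : ℝ, 0 < ε → ∃ N, ∀ m ≥ N, ∀ n ≥ N, nrm (u m - u n) < ε) →
    ∃ v ∈ carrier, ∀ ε : ℝ, 0 < ε → ∃ N, ∀ n ≥ N, nrm (u n - v) < ε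
  zeroFree_mem_iff : ∀ x : ℕ → X, zeroFree x ≠ 0 → (x ∈ carrier ↔ zeroFree x ∈ carrier)
  nrm_le_K_mul : ∀ x : ℕ → X, zeroFree x ≠ 0 → x ∈ carrier → nrm x ≤ K * nrm (zeroFree x)
  coord_le_nrm : ∀ x ∈ carrier, ∀ j, ‖x j‖ ≤ nrm x

/-- A strongly invariant sequence space: an invariant sequence space containing `c₀₀(X)`
and such that a sequence belongs to it iff all its subsequences do. -/
structure StrongInvSeqSpace (𝕂 : Type*) [RCLike 𝕂] (X : Type*)
    [NormedAddCommGroup X] [NormedSpace 𝕂 X] extends InvSeqSpace 𝕂 X where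
  c00_subset : ∀ x : ℕ → X, (∃ N, ∀ j, N ≤ j → x j = 0) → x ∈ carrier
  mem_iff_subseq : ∀ x : ℕ → X,
    x ∈ carrier ↔ ∀ g : ℕ → ℕ, StrictMono g → (fun k => x (g k)) ∈ carrier

/-- `f` is compatible with a sequence space `E` (Definition 2.3 of [NP]). -/
def Compatible (𝕂 : Type*) [RCLike 𝕂] {X Y : Type*}
    [NormedAddCommGroup X] [NormedSpace 𝕂 X] [NormedAddCommGroup Y] [NormedSpace 𝕂 Y]
    (f : X → Y) (E : Set (ℕ → Y)) : Prop :=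
  f 0 = 0 ∧ ∀ (x : ℕ → X) (a : 𝕂), a ≠ 0 →
    (fun j => f (x j)) ∉ E → (fun j => f (a • x j)) ∉ E

/-- The set `G(E, f, (E_λ)_{λ∈Γ})`. -/
def Gset {𝕂 : Type*} [RCLike 𝕂] {X Y Γ : Type*}
    [NormedAddCommGroup X] [NormedSpace 𝕂 X] [NormedAddCommGroup Y] [NormedSpace 𝕂 Y]
    (E : InvSeqSpace 𝕂 X) (f : X → Y) (F : Γ → StrongInvSeqSpace 𝕂 Y) : Set (ℕ → X) :=
  {x | x ∈ E.carrier ∧ (fun j => f (x j)) ∉ ⋃ lam, ((F lam).carrier : Set (ℕ → Y))}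

/-- `W` is closed in the sequence space `E` (w.r.t. the metric induced by `E.nrm`). -/
def ClosedIn {𝕂 : Type*} [RCLike 𝕂] {X : Type*}
    [NormedAddCommGroup X] [NormedSpace 𝕂 X]
    (E : InvSeqSpace 𝕂 X) (W : Set (ℕ → X)) : Prop :=
  ∀ x ∈ E.carrier, (∀ ε : ℝ, 0 < ε → ∃ y ∈ W, E.nrm (x - y) < ε) → x ∈ W

/-! Since `f 0 = 0`, the support of `f ∘ x` lies in that of `x`. If `x` had finite support,
`f ∘ x` would lie in `c₀₀(Y) ⊆ E_λ`; hence `x⁰ ≠ 0` and `x⁰ ∈ E` by (b1). If `f ∘ x⁰ ∈ E_λ`, then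
either `f ∘ x` has finite support, or `(f ∘ x)⁰` is a subsequence of `f ∘ x⁰`, hence lies in
`E_λ`, and then `f ∘ x ∈ E_λ` by (b1); either way `x ∉ G`. -/

open Function

section ZeroFree

variable {X : Type*} [Zero X] {x : ℕ → X}

theorem zeroFree_of_infinite (hx : (support x).Infinite) :
    zeroFree x = fun k => x (Nat.nth (fun j => x j ≠ 0) k) :=
  if_pos hx

theorem zeroFree_ne_zero (hx : (support x).Infinite) : zeroFree x ≠ 0 := fun h =>
  Nat.nth_mem_of_infinite hx 0 (by simpa [zeroFree_of_infinite hx] using congrFun h 0)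

open scoped Classical in
theorem zeroFree_count (hx : (support x).Infinite) {n : ℕ} (hn : x n ≠ 0) :
    zeroFree x (Nat.count (fun j => x j ≠ 0) n) = x n := by
  rw [zeroFree_of_infinite hx]
  exact congrArg x (Nat.nth_count hn)

theorem exists_strictMono_zeroFree_comp {Y : Type*} [Zero Y] {f : X → Y} (hf : f 0 = 0)
    (hfx : (support (f ∘ x)).Infinite) :
    ∃ φ : ℕ → ℕ, StrictMono φ ∧ zeroFree (f ∘ x) = fun k => f (zeroFree x (φ k)) := by
  classical
  have hx : (support x).Infinite := hfx.mono (support_comp_subset hf x)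
  have hx_nth (k : ℕ) : x (Nat.nth (fun j => (f ∘ x) j ≠ 0) k) ≠ 0 := fun h =>
    Nat.nth_mem_of_infinite hfx k ((congrArg f h).trans hf)
  refine ⟨fun k => Nat.count (fun j => x j ≠ 0) (Nat.nth (fun j => (f ∘ x) j ≠ 0) k),
    fun a b hab => Nat.count_strict_mono (hx_nth a) (Nat.nth_strictMono hfx hab), ?_⟩
  funext k
  rw [zeroFree_count hx (hx_nth k), zeroFree_of_infinite hfx]
  rfl

end ZeroFree

namespace StrongInvSeqSpace

variable {𝕂 Y : Type*} [RCLike 𝕂] [NormedAddCommGroup Y] [NormedSpace 𝕂 Y]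
  (F : StrongInvSeqSpace 𝕂 Y)

theorem mem_of_finite_support {y : ℕ → Y} (hy : (support y).Finite) : y ∈ F.carrier := by
  obtain ⟨N, hN⟩ := hy.bddAbove
  exact F.c00_subset y ⟨N + 1, fun j hj => notMem_support.1 fun h => by linarith [hN h]⟩

theorem comp_mem_of_comp_zeroFree_mem {X : Type*} [Zero X] {f : X → Y} (hf : f 0 = 0)
    {x : ℕ → X} (h : (fun k => f (zeroFree x k)) ∈ F.carrier) : f ∘ x ∈ F.carrier := by
  rcases (support (f ∘ x)).finite_or_infinite with hfin | hinf
  · exact F.mem_of_finite_support hfin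
  obtain ⟨φ, hφ, hsub⟩ := exists_strictMono_zeroFree_comp hf hinf
  refine (F.zeroFree_mem_iff _ (zeroFree_ne_zero hinf)).2 ?_
  rw [hsub]
  exact (F.mem_iff_subseq _).1 h φ hφ

end StrongInvSeqSpace

theorem zeroFree_mem_Gset_general
    {𝕂 X Y Γ : Type*} [RCLike 𝕂] [Nonempty Γ]
    [NormedAddCommGroup X] [NormedSpace 𝕂 X]
    [NormedAddCommGroup Y] [NormedSpace 𝕂 Y]
    (E : InvSeqSpace 𝕂 X) (F : Γ → StrongInvSeqSpace 𝕂 Y)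
    (f : X → Y) (hf : f 0 = 0)
    (x : ℕ → X) (hx : x ∈ Gset E f F) :
    zeroFree x ∈ Gset E f F := by
  obtain ⟨hxE, hxF⟩ := hx
  have hnotF (lam : Γ) : f ∘ x ∉ (F lam).carrier := fun h => hxF (Set.mem_iUnion.2 ⟨lam, h⟩)
  have hinf : (support x).Infinite := fun hfin =>
    hnotF (Classical.arbitrary Γ) <|
      (F _).mem_of_finite_support (hfin.subset (support_comp_subset hf x))
  refine ⟨(E.zeroFree_mem_iff x (zeroFree_ne_zero hinf)).1 hxE, fun h => ?_⟩
  obtain ⟨lam, hlam⟩ := Set.mem_iUnion.1 h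
  exact hnotF lam ((F lam).comp_mem_of_comp_zeroFree_mem hf hlam)

/-- If `x ∈ G(E, f, (E_λ)_{λ∈Γ})` (with `Γ` nonempty and `f(0) = 0`), then its zero-free
version `x⁰` also belongs to `G(E, f, (E_λ)_{λ∈Γ})`. -/
theorem zeroFree_mem_Gset
    {𝕂 X Y Γ : Type*} [RCLike 𝕂] [Nonempty Γ]
    [NormedAddCommGroup X] [NormedSpace 𝕂 X] [CompleteSpace X]
    [NormedAddCommGroup Y] [NormedSpace 𝕂 Y] [CompleteSpace Y]
    (E : InvSeqSpace 𝕂 X) (F : Γ → StrongInvSeqSpace 𝕂 Y)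
    (f : X → Y) (hf : f 0 = 0)
    (x : ℕ → X) (hx : x ∈ Gset E f F) :
    zeroFree x ∈ Gset E f F :=
  zeroFree_mem_Gset_general E F f hf x hx
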